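/- arXiv:2303.12230 — 2 statements merged into one kernel-verified Lean document; each statement's English description precedes it below -/
import Mathlib

section
/- Let B be the backward shift on ℓ^p(ℕ, ω) with sup_n ω_n/ω_{n+1} < ∞. Suppose there exist a strictly increasing sequence (n_k) of integers, a convergent sequence (x_k) in ℓ^p(ℕ, ω), and a non-zero vector y such that B^{n_k} x_k converges weakly to y. Then liminf_{n→∞} ω_n = 0 (equivalently, B is hypercyclic). -/
/-! Evaluation at a coordinate `j` with `y j ≠ 0` is continuous, so weak convergence gives
`x_k (j + n_k) → y j ≠ 0`. On the other hand `ω m ‖v m‖ ≤ ‖v‖` for every `v`, and the weighted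
coordinates `ω m ‖z m‖` of the limit `z` tend to `0`; hence
`ω (j + n_k) ‖x_k (j + n_k)‖ ≤ ‖x_k - z‖ + ω (j + n_k) ‖z (j + n_k)‖ → 0`, and dividing by
`‖x_k (j + n_k)‖ → ‖y j‖` shows `ω (j + n_k) → 0`. -/

open MeasureTheory Filter Topology
open scoped ENNReal

noncomputable section

/-- The weighted measure on the index set `I` giving the point `k` mass `(ω k) ^ p`,
so that `Lp ℂ p (wMeasure p ω)` is the weighted sequence space `ℓ^p(I, ω)`. -/
def wMeasure {I : Type*} [MeasurableSpace I] (p : ENNReal) (ω : I → ℝ) : Measure I :=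
  Measure.sum (fun k => ENNReal.ofReal ((ω k) ^ p.toReal) • Measure.dirac k)

section Weighted

variable {I : Type*} [MeasurableSpace I] [MeasurableSingletonClass I] {p : ℝ≥0∞} {ω : I → ℝ}

lemma lintegral_wMeasure (f : I → ℝ≥0∞) :
    ∫⁻ i, f i ∂wMeasure p ω = ∑' i, ENNReal.ofReal (ω i ^ p.toReal) * f i := by
  simp only [wMeasure, lintegral_sum_measure, lintegral_smul_measure, lintegral_dirac, smul_eq_mul]

lemma wMeasure_singleton (j : I) :
    wMeasure p ω {j} = ENNReal.ofReal (ω j ^ p.toReal) := by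
  rw [wMeasure, Measure.sum_apply _ (measurableSet_singleton j), tsum_eq_single j]
  · simp
  · intro i hij
    simp [Measure.dirac_apply', Set.indicator_of_notMem, hij]

lemma eq_of_ae_eq_wMeasure (hω : ∀ i, 0 < ω i) {β : Type*}
    {f g : I → β} (h : f =ᵐ[wMeasure p ω] g) : f = g := by
  funext j
  by_contra hj
  have hle : wMeasure p ω {j} ≤ wMeasure p ω {i | f i ≠ g i} :=
    measure_mono (by simpa using hj)
  rw [ae_iff.mp h, wMeasure_singleton, nonpos_iff_eq_zero, ENNReal.ofReal_eq_zero] at hle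
  exact (Real.rpow_pos_of_pos (hω j) _).not_ge hle

variable {E : Type*} [NormedAddCommGroup E]

lemma eLpNorm_wMeasure_rpow (hp0 : p ≠ 0) (hp : p ≠ ∞)
    (hω : ∀ i, 0 ≤ ω i) (f : I → E) :
    eLpNorm f p (wMeasure p ω) ^ p.toReal = ∑' i, ENNReal.ofReal (ω i * ‖f i‖) ^ p.toReal := by
  rw [eLpNorm_eq_eLpNorm' hp0 hp, ← lintegral_rpow_enorm_eq_rpow_eLpNorm'
    (ENNReal.toReal_pos hp0 hp), lintegral_wMeasure]
  congr 1 with i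
  rw [← ofReal_norm, ENNReal.ofReal_rpow_of_nonneg (norm_nonneg _) ENNReal.toReal_nonneg,
    ← ENNReal.ofReal_mul (Real.rpow_nonneg (hω i) _), ← Real.mul_rpow (hω i) (norm_nonneg _),
    ENNReal.ofReal_rpow_of_nonneg (mul_nonneg (hω i) (norm_nonneg _)) ENNReal.toReal_nonneg]

lemma ofReal_mul_norm_le_eLpNorm_wMeasure (hp0 : p ≠ 0)
    (hp : p ≠ ∞) (hω : ∀ i, 0 ≤ ω i) (f : I → E) (j : I) :
    ENNReal.ofReal (ω j * ‖f j‖) ≤ eLpNorm f p (wMeasure p ω) := by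
  rw [← ENNReal.rpow_le_rpow_iff (ENNReal.toReal_pos hp0 hp), eLpNorm_wMeasure_rpow hp0 hp hω]
  exact ENNReal.le_tsum (f := fun i => ENNReal.ofReal (ω i * ‖f i‖) ^ p.toReal) j

lemma tendsto_mul_norm_cofinite_of_eLpNorm_ne_top (hp0 : p ≠ 0)
    (hp : p ≠ ∞) (hω : ∀ i, 0 ≤ ω i) {f : I → E} (hf : eLpNorm f p (wMeasure p ω) ≠ ∞) :
    Tendsto (fun i => ω i * ‖f i‖) cofinite (𝓝 0) := by
  have hpos : 0 < p.toReal := ENNReal.toReal_pos hp0 hp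
  have hsum : ∑' i, ENNReal.ofReal (ω i * ‖f i‖) ^ p.toReal ≠ ∞ := by
    rw [← eLpNorm_wMeasure_rpow hp0 hp hω]
    exact ENNReal.rpow_ne_top_of_nonneg hpos.le hf
  have hroot := (ENNReal.tendsto_cofinite_zero_of_tsum_ne_top hsum).ennrpow_const p.toReal⁻¹
  simp only [← ENNReal.rpow_mul, mul_inv_cancel₀ hpos.ne', ENNReal.rpow_one,
    ENNReal.zero_rpow_of_pos (inv_pos.mpr hpos)] at hroot
  rw [← ENNReal.tendsto_toReal_zero_iff] at hroot
  simpa only [ENNReal.toReal_ofReal (mul_nonneg (hω _) (norm_nonneg _))] using hroot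

lemma mul_norm_le_toReal_eLpNorm_wMeasure (hp0 : p ≠ 0)
    (hp : p ≠ ∞) (hω : ∀ i, 0 ≤ ω i) {f : I → E} (hf : eLpNorm f p (wMeasure p ω) ≠ ∞) (j : I) :
    ω j * ‖f j‖ ≤ (eLpNorm f p (wMeasure p ω)).toReal := by
  rw [← ENNReal.ofReal_le_iff_le_toReal hf]
  exact ofReal_mul_norm_le_eLpNorm_wMeasure hp0 hp hω f j

end Weighted

namespace MeasureTheory.Lp

variable {I : Type*} [MeasurableSpace I] [MeasurableSingletonClass I] {p : ℝ≥0∞} [Fact (1 ≤ p)]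
  {ω : I → ℝ} {E : Type*} [NormedAddCommGroup E]

lemma tendsto_mul_norm_apply_of_tendsto (hp : p ≠ ∞) (hω : ∀ i, 0 ≤ ω i) {α : Type*}
    {l : Filter α} {x : α → Lp E p (wMeasure p ω)} {z : Lp E p (wMeasure p ω)}
    (hx : Tendsto x l (𝓝 z)) {φ : α → I} (hφ : Tendsto φ l cofinite) :
    Tendsto (fun k => ω (φ k) * ‖x k (φ k)‖) l (𝓝 0) := by
  have hp0 : p ≠ 0 := (zero_lt_one.trans_le Fact.out).ne'
  have hdist : Tendsto (fun k => dist (x k) z) l (𝓝 0) := tendsto_iff_dist_tendsto_zero.mp hx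
  have htail : Tendsto (fun k => ω (φ k) * ‖z (φ k)‖) l (𝓝 0) :=
    (tendsto_mul_norm_cofinite_of_eLpNorm_ne_top hp0 hp hω (eLpNorm_ne_top z)).comp hφ
  refine squeeze_zero (fun k => mul_nonneg (hω _) (norm_nonneg _)) (fun k => ?_)
    (by simpa using hdist.add htail)
  have hdiff : ω (φ k) * ‖(⇑(x k) - ⇑z) (φ k)‖ ≤ dist (x k) z := by
    rw [dist_def]
    exact mul_norm_le_toReal_eLpNorm_wMeasure hp0 hp hω
      ((Lp.memLp (x k)).sub (Lp.memLp z)).eLpNorm_ne_top (φ k)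
  calc ω (φ k) * ‖x k (φ k)‖ ≤ ω (φ k) * (‖(⇑(x k) - ⇑z) (φ k)‖ + ‖z (φ k)‖) := by
        gcongr
        · exact hω _
        · exact norm_le_norm_sub_add _ _
    _ ≤ dist (x k) z + ω (φ k) * ‖z (φ k)‖ := by rw [mul_add]; gcongr

variable (𝕜 : Type*) [NormedField 𝕜] [NormedSpace 𝕜 E]

def evalCLM (hp : p ≠ ∞) (hω : ∀ i, 0 < ω i) (j : I) : Lp E p (wMeasure p ω) →L[𝕜] E :=
  LinearMap.mkContinuous
    { toFun := fun x => x j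
      map_add' := fun x y => congrFun (eq_of_ae_eq_wMeasure hω (coeFn_add x y)) j
      map_smul' := fun c x => congrFun (eq_of_ae_eq_wMeasure hω (coeFn_smul c x)) j }
    (ω j)⁻¹
    (fun x => by
      rw [inv_mul_eq_div, le_div_iff₀' (hω j)]
      exact mul_norm_le_toReal_eLpNorm_wMeasure (zero_lt_one.trans_le Fact.out).ne' hp
        (fun i => (hω i).le) (eLpNorm_ne_top x) j)

@[simp]
lemma evalCLM_apply (hp : p ≠ ∞) (hω : ∀ i, 0 < ω i) (j : I) (x : Lp E p (wMeasure p ω)) :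
    evalCLM 𝕜 hp hω j x = x j :=
  rfl

variable {𝕜} in
lemma pow_apply_eq_apply_add_of_shift {μ : Measure ℕ}
    {B : Lp E p μ →L[𝕜] Lp E p μ} (hB : ∀ x k, B x k = x (k + 1))
    (m : ℕ) (x : Lp E p μ) (j : ℕ) : (B ^ m) x j = x (j + m) := by
  induction m generalizing x with
  | zero => rfl
  | succ m ih => rw [pow_succ, mul_apply_eq_comp, ih, hB, add_assoc]

end MeasureTheory.Lp

lemma liminf_eq_zero_of_tendsto_comp {β : Type*} {f : Filter β} {u : β → ℝ} (hu : ∀ b, 0 ≤ u b)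
    {α : Type*} {l : Filter α} [l.NeBot] {φ : α → β} (hφ : Tendsto φ l f)
    (h : Tendsto (u ∘ φ) l (𝓝 0)) : liminf u f = 0 := by
  have hfreq : ∀ ε > 0, ∃ᶠ b in f, u b ≤ ε := fun ε hε =>
    hφ.frequently (h.eventually (ge_mem_nhds hε)).frequently
  refine le_antisymm (le_of_forall_gt_imp_ge_of_dense fun ε hε => ?_) ?_
  · exact liminf_le_of_frequently_le (hfreq ε hε)
      (isBoundedUnder_of_eventually_ge (Eventually.of_forall hu))
  · exact le_liminf_of_le (IsCoboundedUnder.of_frequently_le (hfreq 1 one_pos))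
      (Eventually.of_forall hu)

theorem stmt3_general (p : ENNReal) [Fact (1 ≤ p)] (hp : p ≠ ∞) (ω : ℕ → ℝ) (hω : ∀ k, 0 < ω k)
    (B : Lp ℂ p (wMeasure p ω) →L[ℂ] Lp ℂ p (wMeasure p ω))
    (hB : ∀ (x : Lp ℂ p (wMeasure p ω)) (k : ℕ), B x k = x (k + 1))
    (n : ℕ → ℕ) (hn : StrictMono n) (x : ℕ → Lp ℂ p (wMeasure p ω))
    (z : Lp ℂ p (wMeasure p ω)) (hconv : Tendsto x atTop (nhds z))
    (y : Lp ℂ p (wMeasure p ω)) (hy : y ≠ 0)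
    (hweak : ∀ f : Lp ℂ p (wMeasure p ω) →L[ℂ] ℂ,
      Tendsto (fun k => f ((B ^ n k) (x k))) atTop (nhds (f y))) :
    Filter.liminf ω Filter.atTop = 0 := by
  obtain ⟨j, hj⟩ : ∃ j, y j ≠ 0 := by
    by_contra! h
    exact hy (Lp.eq_zero_iff_ae_eq_zero.mpr (Eventually.of_forall h))
  have hφ : Tendsto (fun k => j + n k) atTop atTop :=
    tendsto_atTop_mono (fun k => Nat.le_add_left _ _) hn.tendsto_atTop
  have hcoord : Tendsto (fun k => x k (j + n k)) atTop (𝓝 (y j)) := by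
    simpa only [Lp.evalCLM_apply, Lp.pow_apply_eq_apply_add_of_shift hB] using
      hweak (Lp.evalCLM ℂ hp hω j)
  have hsmall : Tendsto (fun k => ω (j + n k) * ‖x k (j + n k)‖) atTop (𝓝 0) :=
    Lp.tendsto_mul_norm_apply_of_tendsto hp (fun i => (hω i).le) hconv
      (Nat.cofinite_eq_atTop ▸ hφ)
  refine liminf_eq_zero_of_tendsto_comp (fun m => (hω m).le) hφ ?_
  rw [← zero_mul ‖y j‖] at hsmall
  exact (tendsto_mul_iff_of_ne_zero hcoord.norm (norm_ne_zero_iff.mpr hj)).mp hsmall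

theorem stmt3 (p : ENNReal) [Fact (1 ≤ p)] (hp : p ≠ ∞) (ω : ℕ → ℝ) (hω : ∀ k, 0 < ω k)
    (hbdd : ∃ C : ℝ, ∀ n, ω n / ω (n + 1) ≤ C)
    (B : Lp ℂ p (wMeasure p ω) →L[ℂ] Lp ℂ p (wMeasure p ω))
    (hB : ∀ (x : Lp ℂ p (wMeasure p ω)) (k : ℕ), B x k = x (k + 1))
    (n : ℕ → ℕ) (hn : StrictMono n) (x : ℕ → Lp ℂ p (wMeasure p ω))
    (z : Lp ℂ p (wMeasure p ω)) (hconv : Tendsto x atTop (nhds z))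
    (y : Lp ℂ p (wMeasure p ω)) (hy : y ≠ 0)
    (hweak : ∀ f : Lp ℂ p (wMeasure p ω) →L[ℂ] ℂ,
      Tendsto (fun k => f ((B ^ n k) (x k))) atTop (nhds (f y))) :
    Filter.liminf ω Filter.atTop = 0 :=
  stmt3_general p hp ω hω B hB n hn x z hconv y hy hweak
end
end

section
/- Let B be the bilateral backward shift on ℓ^p(ℤ, ω) with sup_{n∈ℤ} ω_n/ω_{n+1} < ∞. If there exist x ∈ ℓ^p(ℤ, ω) and a subset Γ of ℂ that is both bounded and bounded away from zero such that Orb(Γx, B) has a non-zero norm limit point, then B is hypercyclic. -/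
/-!
Write `ℓ = ℓ^p(ℤ, ω)`. Suppose `λₖ Bⁿᵏ x → y ≠ 0` and pick `j` with `y j ≠ 0`. Reading this
convergence at coordinate `j`, where it says `λₖ x (j + nₖ) → y j` with `|λₖ| ≤ M`, and using
`ω (j + nₖ) |x (j + nₖ)| → 0` forces `ω (j + nₖ) → 0`. Reading it at coordinate `i - nₖ`, where
`λₖ Bⁿᵏ x` has entry `λₖ x i` with `|λₖ x i| ≥ c |x i|`, forces `ω (i - nₖ) → 0` whenever
`x i ≠ 0`, and such `i` exist arbitrarily far to the right. Since `ω k ≤ C ω (k + 1)`, small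
weights propagate to the left, and together this is Salas' condition. For finitely supported
`u`, `v` it makes `u + Sᵐ v` (`S` the forward shift) close to `u` while `Bᵐ` maps it close to
`v`; finitely supported vectors are dense, so `B` is topologically transitive, and Birkhoff's
transitivity theorem on the separable Banach space `ℓ` gives a vector with dense orbit.
-/

open MeasureTheory Filter Topology
open scoped ENNReal

noncomputable section

instance (p : ℝ≥0∞) (ω : ℤ → ℝ) : SFinite (wMeasure p ω) := by
  unfold wMeasure
  infer_instance

theorem exists_dense_range_of_transitive {X : Type*} [TopologicalSpace X] [BaireSpace X]
    [SecondCountableTopology X] [Nonempty X] {T : ℕ → X → X} (hT : ∀ n, Continuous (T n))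
    (htrans : ∀ U V : Set X, IsOpen U → U.Nonempty → IsOpen V → V.Nonempty →
      ∃ n, (U ∩ T n ⁻¹' V).Nonempty) :
    ∃ z, Dense (Set.range fun n => T n z) := by
  have hb := TopologicalSpace.isBasis_countableBasis X
  set S := {V ∈ TopologicalSpace.countableBasis X | V.Nonempty}
  have hS : S.Countable := (TopologicalSpace.countable_countableBasis X).mono fun _ h => h.1
  have hopen : ∀ V ∈ S, IsOpen (⋃ n, T n ⁻¹' V) := fun V hV =>
    isOpen_iUnion fun n => (hb.isOpen hV.1).preimage (hT n)
  have hdense : ∀ V ∈ S, Dense (⋃ n, T n ⁻¹' V) := fun V hV =>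
    dense_iff_inter_open.2 fun U hU hUne => by
      obtain ⟨n, hn⟩ := htrans U V hU hUne (hb.isOpen hV.1) hV.2
      simpa only [Set.inter_iUnion, Set.nonempty_iUnion] using ⟨n, hn⟩
  obtain ⟨z, hz⟩ := (dense_biInter_of_isOpen hopen hS hdense).nonempty
  refine ⟨z, hb.dense_iff.2 fun V hV hne => ?_⟩
  obtain ⟨n, hn⟩ := Set.mem_iUnion.1 (Set.mem_iInter₂.1 hz V ⟨hV, hne⟩)
  exact ⟨T n z, hn, n, rfl⟩

theorem tendsto_zero_of_mul_tendsto_zero_of_ge {α : Type*} {l : Filter α} {a b : α → ℝ} {δ : ℝ}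
    (hδ : 0 < δ) (ha : ∀ j, 0 ≤ a j) (hb : ∀ᶠ j in l, δ ≤ b j)
    (hab : Tendsto (fun j => a j * b j) l (𝓝 0)) : Tendsto a l (𝓝 0) := by
  refine squeeze_zero' (Eventually.of_forall ha) (hb.mono fun j hj => ?_)
    (by simpa using hab.div_const δ)
  rw [le_div_iff₀ hδ]
  exact mul_le_mul_of_nonneg_left hj (ha j)

section Weights

variable {ω : ℤ → ℝ} {C : ℝ}

theorem weight_le_pow_mul (hω : ∀ k, 0 < ω k) (hC : ∀ k, ω k / ω (k + 1) ≤ C) (k : ℤ) (d : ℕ) :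
    ω k ≤ C ^ d * ω (k + d) := by
  have hC0 : 0 ≤ C := (div_pos (hω 0) (hω 1)).le.trans (hC 0)
  induction d with
  | zero => simp
  | succ d ih =>
    calc ω k ≤ C ^ d * ω (k + d) := ih
      _ ≤ C ^ d * (C * ω (k + d + 1)) := by
          gcongr
          exact (div_le_iff₀ (hω _)).1 (hC _)
      _ = C ^ (d + 1) * ω (k + ↑(d + 1)) := by push_cast; ring_nf

theorem tendsto_weight_add_of_le (hω : ∀ k, 0 < ω k) (hC : ∀ k, ω k / ω (k + 1) ≤ C)
    {α : Type*} {l : Filter α} {a : α → ℤ} {k q : ℤ} (hkq : k ≤ q)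
    (h : Tendsto (fun j => ω (q + a j)) l (𝓝 0)) : Tendsto (fun j => ω (k + a j)) l (𝓝 0) := by
  refine squeeze_zero (fun j => (hω _).le) (fun j => ?_)
    (by simpa using h.const_mul (C ^ (q - k).toNat))
  convert weight_le_pow_mul hω hC (k + a j) (q - k).toNat using 3
  omega

/-- Salas' criterion `liminf_{n → ∞} max (ω (q + n)) (ω (q - n)) = 0`, in sequential form. -/
def SalasCondition (ω : ℤ → ℝ) : Prop :=
  ∀ q : ℤ, ∃ m : ℕ → ℕ, Tendsto (fun j => ω (q + m j)) atTop (𝓝 0) ∧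
    Tendsto (fun j => ω (q - m j)) atTop (𝓝 0)

end Weights

namespace WeightedLp

variable {p : ℝ≥0∞} {ω : ℤ → ℝ}

theorem wMeasure_singleton (p : ℝ≥0∞) (ω : ℤ → ℝ) (k : ℤ) :
    wMeasure p ω {k} = ENNReal.ofReal (ω k ^ p.toReal) := by
  rw [wMeasure, Measure.sum_apply _ (measurableSet_singleton k),
    tsum_eq_single k fun j hj => by simp [Ne.symm hj]]
  simp

theorem wMeasure_singleton_ne_top (p : ℝ≥0∞) (ω : ℤ → ℝ) (k : ℤ) : wMeasure p ω {k} ≠ ∞ := by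
  rw [wMeasure_singleton]
  exact ENNReal.ofReal_ne_top

theorem lintegral_wMeasure (p : ℝ≥0∞) (ω : ℤ → ℝ) (f : ℤ → ℝ≥0∞) :
    ∫⁻ k, f k ∂wMeasure p ω = ∑' k, ENNReal.ofReal (ω k ^ p.toReal) * f k := by
  simp only [wMeasure, lintegral_sum_measure, lintegral_smul_measure, lintegral_dirac, smul_eq_mul]

theorem ae_wMeasure_iff (hω : ∀ k, 0 < ω k) {P : ℤ → Prop} :
    (∀ᵐ k ∂wMeasure p ω, P k) ↔ ∀ k, P k := by
  rw [ae_iff_of_countable]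
  refine forall_congr' fun k => ⟨fun h => h ?_, fun h _ => h⟩
  rw [wMeasure_singleton]
  exact (ENNReal.ofReal_pos.2 (Real.rpow_pos_of_pos (hω k) _)).ne'

local notation "ℓ" => Lp ℂ p (wMeasure p ω)

theorem apply_eq_of_ae_eq (hω : ∀ k, 0 < ω k) {f g : ℤ → ℂ} (h : f =ᵐ[wMeasure p ω] g) (k : ℤ) :
    f k = g k :=
  (ae_wMeasure_iff hω).1 h k

theorem ext (hω : ∀ k, 0 < ω k) {f g : ℓ} (h : ∀ k, f k = g k) : f = g :=
  Lp.ext ((ae_wMeasure_iff hω).2 h)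

theorem zero_apply (hω : ∀ k, 0 < ω k) (k : ℤ) : (0 : ℓ) k = 0 :=
  apply_eq_of_ae_eq hω (Lp.coeFn_zero _ _ _) k

theorem add_apply (hω : ∀ k, 0 < ω k) (f g : ℓ) (k : ℤ) : (f + g) k = f k + g k :=
  apply_eq_of_ae_eq hω (Lp.coeFn_add f g) k

theorem sub_apply (hω : ∀ k, 0 < ω k) (f g : ℓ) (k : ℤ) : (f - g) k = f k - g k :=
  apply_eq_of_ae_eq hω (Lp.coeFn_sub f g) k

theorem smul_apply (hω : ∀ k, 0 < ω k) (c : ℂ) (f : ℓ) (k : ℤ) : (c • f) k = c * f k :=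
  apply_eq_of_ae_eq hω (Lp.coeFn_smul c f) k

theorem sum_apply (hω : ∀ k, 0 < ω k) {ι : Type*} (s : Finset ι) (f : ι → ℓ) (k : ℤ) :
    (∑ i ∈ s, f i) k = ∑ i ∈ s, f i k := by
  classical
  induction s using Finset.induction with
  | empty => rw [Finset.sum_empty, zero_apply hω, Finset.sum_empty]
  | insert i s hi ih => rw [Finset.sum_insert hi, add_apply hω, ih, Finset.sum_insert hi]

variable (p ω) in
def single (k : ℤ) (c : ℂ) : ℓ :=
  indicatorConstLp p (measurableSet_singleton k) (wMeasure_singleton_ne_top p ω k) c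

theorem single_apply (hω : ∀ k, 0 < ω k) (k : ℤ) (c : ℂ) (j : ℤ) :
    single p ω k c j = if j = k then c else 0 := by
  rw [single, apply_eq_of_ae_eq hω indicatorConstLp_coeFn j]
  simp only [Set.indicator_apply, Set.mem_singleton_iff]

theorem sum_single_apply (hω : ∀ k, 0 < ω k) (F : Finset ℤ) (f : ℤ → ℂ) (j : ℤ) :
    (∑ k ∈ F, single p ω k (f k)) j = if j ∈ F then f j else 0 := by
  simp only [sum_apply hω, single_apply hω, Finset.sum_ite_eq]

theorem exists_apply_ne_zero (hω : ∀ k, 0 < ω k) {f : ℓ} (hf : f ≠ 0) : ∃ k, f k ≠ 0 := by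
  by_contra! h
  exact hf (ext hω fun k => by rw [h k, zero_apply hω])

variable [Fact (1 ≤ p)]

theorem exponent_ne_zero : p ≠ 0 := (zero_lt_one.trans_le Fact.out).ne'

theorem exponent_toReal_pos (hp : p ≠ ∞) : 0 < p.toReal := ENNReal.toReal_pos exponent_ne_zero hp

theorem eLpNorm_rpow_eq_tsum (hp : p ≠ ∞) (hω : ∀ k, 0 < ω k) (g : ℤ → ℂ) :
    eLpNorm g p (wMeasure p ω) ^ p.toReal = ∑' k, (ENNReal.ofReal (ω k) * ‖g k‖ₑ) ^ p.toReal := by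
  have ht := exponent_toReal_pos hp
  rw [eLpNorm_eq_lintegral_rpow_enorm_toReal exponent_ne_zero hp, one_div,
    ENNReal.rpow_inv_rpow ht.ne', lintegral_wMeasure]
  congr 1 with k
  rw [ENNReal.mul_rpow_of_nonneg _ _ ht.le, ENNReal.ofReal_rpow_of_pos (hω k)]

theorem weight_mul_norm_apply_le (hp : p ≠ ∞) (hω : ∀ k, 0 < ω k) (f : ℓ) (k : ℤ) :
    ω k * ‖f k‖ ≤ ‖f‖ := by
  have ht := exponent_toReal_pos hp
  have h : ENNReal.ofReal (ω k) * ‖f k‖ₑ ≤ eLpNorm f p (wMeasure p ω) := by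
    rw [← ENNReal.rpow_le_rpow_iff ht, eLpNorm_rpow_eq_tsum hp hω]
    exact ENNReal.le_tsum k
  calc ω k * ‖f k‖ = (ENNReal.ofReal (ω k) * ‖f k‖ₑ).toReal := by
        rw [ENNReal.toReal_mul, ENNReal.toReal_ofReal (hω k).le, toReal_enorm]
    _ ≤ ‖f‖ := ENNReal.toReal_mono (Lp.eLpNorm_ne_top f) h

theorem norm_single (hp : p ≠ ∞) (hω : ∀ k, 0 < ω k) (k : ℤ) (c : ℂ) :
    ‖single p ω k c‖ = ω k * ‖c‖ := by
  have ht := exponent_toReal_pos hp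
  rw [single, norm_indicatorConstLp exponent_ne_zero hp, measureReal_def,
    wMeasure_singleton, ENNReal.toReal_ofReal (Real.rpow_nonneg (hω k).le _), one_div,
    Real.rpow_rpow_inv (hω k).le ht.ne', mul_comm]

theorem hasSum_single (hp : p ≠ ∞) (hω : ∀ k, 0 < ω k) (f : ℓ) :
    HasSum (fun k => single p ω k (f k)) f := by
  have ht := exponent_toReal_pos hp
  set a : ℤ → ℝ≥0∞ := fun k => (ENNReal.ofReal (ω k) * ‖f k‖ₑ) ^ p.toReal
  have ha : ∑' k, a k ≠ ∞ := by
    rw [← eLpNorm_rpow_eq_tsum hp hω]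
    exact ENNReal.rpow_ne_top_of_nonneg ht.le (Lp.eLpNorm_ne_top f)
  have hpow : Tendsto (fun F : Finset ℤ =>
      eLpNorm (⇑(∑ k ∈ F, single p ω k (f k)) - ⇑f) p (wMeasure p ω) ^ p.toReal) atTop (𝓝 0) := by
    refine (ENNReal.tendsto_tsum_compl_atTop_zero ha).congr fun F => ?_
    rw [eLpNorm_rpow_eq_tsum hp hω]
    refine (tsum_subtype {k | k ∉ F} a).trans (tsum_congr fun k => ?_)
    simp only [Set.indicator_apply, Set.mem_ofPred_eq, Pi.sub_apply, sum_single_apply hω]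
    by_cases hk : k ∈ F
    · simp [hk, ENNReal.zero_rpow_of_pos ht]
    · simp [hk, a]
  rw [HasSum, Lp.tendsto_Lp_iff_tendsto_eLpNorm']
  simpa [Function.comp_def, ENNReal.rpow_rpow_inv ht.ne',
    ENNReal.zero_rpow_of_pos (inv_pos.2 ht)] using
    (ENNReal.continuous_rpow_const (y := p.toReal⁻¹)).tendsto 0 |>.comp hpow

theorem tendsto_weight_mul_norm_apply (hp : p ≠ ∞) (hω : ∀ k, 0 < ω k) (f : ℓ) :
    Tendsto (fun k => ω k * ‖f k‖) cofinite (𝓝 0) := by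
  refine Metric.tendsto_nhds.2 fun ε hε => ?_
  obtain ⟨F, hF⟩ := ((hasSum_single hp hω f).eventually (Metric.ball_mem_nhds f hε)).exists
  filter_upwards [F.eventually_cofinite_notMem] with k hk
  have hfk : (f - ∑ k ∈ F, single p ω k (f k)) k = f k := by
    rw [sub_apply hω, sum_single_apply hω, if_neg hk, sub_zero]
  rw [Real.dist_0_eq_abs, abs_of_nonneg (mul_nonneg (hω k).le (norm_nonneg _)), ← hfk]
  exact (weight_mul_norm_apply_le hp hω _ k).trans_lt (by rwa [← dist_eq_norm, dist_comm])

theorem tendsto_apply (hp : p ≠ ∞) (hω : ∀ k, 0 < ω k) {α : Type*} {l : Filter α} {z : α → ℓ}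
    {y : ℓ} (hz : Tendsto z l (𝓝 y)) (k : ℤ) : Tendsto (fun a => z a k) l (𝓝 (y k)) := by
  rw [tendsto_iff_norm_sub_tendsto_zero] at hz ⊢
  refine squeeze_zero (fun _ => norm_nonneg _) (fun a => ?_) (by simpa using hz.div_const (ω k))
  rw [le_div_iff₀ (hω k), mul_comm, ← sub_apply hω]
  exact weight_mul_norm_apply_le hp hω _ k

theorem tendsto_weight_mul_norm_apply_of_tendsto (hp : p ≠ ∞) (hω : ∀ k, 0 < ω k) {α : Type*}
    {l : Filter α} {z : α → ℓ} {y : ℓ} (hz : Tendsto z l (𝓝 y)) {i : α → ℤ}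
    (hi : Tendsto i l cofinite) : Tendsto (fun a => ω (i a) * ‖z a (i a)‖) l (𝓝 0) := by
  have hbound : ∀ a, ω (i a) * ‖z a (i a)‖ ≤ ‖z a - y‖ + ω (i a) * ‖y (i a)‖ := fun a =>
    calc ω (i a) * ‖z a (i a)‖ ≤ ω (i a) * ‖(z a - y) (i a)‖ + ω (i a) * ‖y (i a)‖ := by
          rw [← mul_add, sub_apply hω]
          exact mul_le_mul_of_nonneg_left (norm_le_norm_sub_add _ _) (hω _).le
      _ ≤ ‖z a - y‖ + ω (i a) * ‖y (i a)‖ := by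
          gcongr; exact weight_mul_norm_apply_le hp hω _ _
  refine squeeze_zero (fun a => mul_nonneg (hω _).le (norm_nonneg _)) hbound ?_
  simpa using (tendsto_iff_norm_sub_tendsto_zero.1 hz).add
    ((tendsto_weight_mul_norm_apply hp hω y).comp hi)

theorem pow_apply {B : ℓ →L[ℂ] ℓ} (hB : ∀ (x : ℓ) (k : ℤ), B x k = x (k + 1))
    (m : ℕ) (f : ℓ) (k : ℤ) : (B ^ m) f k = f (k + m) := by
  induction m generalizing f with
  | zero => simp
  | succ m ih =>
    rw [pow_succ, mul_apply_eq_comp, ih, hB]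
    push_cast
    ring_nf

theorem pow_single (hω : ∀ k, 0 < ω k) {B : ℓ →L[ℂ] ℓ}
    (hB : ∀ (x : ℓ) (k : ℤ), B x k = x (k + 1)) (m : ℕ) (k : ℤ) (c : ℂ) :
    (B ^ m) (single p ω k c) = single p ω (k - m) c :=
  ext hω fun j => by simp only [pow_apply hB, single_apply hω, eq_sub_iff_add_eq]

theorem tendsto_single_zero (hp : p ≠ ∞) (hω : ∀ k, 0 < ω k) {α : Type*} {l : Filter α}
    {i : α → ℤ} (hi : Tendsto (fun a => ω (i a)) l (𝓝 0)) (c : ℂ) :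
    Tendsto (fun a => single p ω (i a) c) l (𝓝 0) := by
  rw [tendsto_zero_iff_norm_tendsto_zero]
  simpa [norm_single hp hω] using hi.mul_const ‖c‖

theorem exists_inter_preimage_pow_nonempty (hp : p ≠ ∞) (hω : ∀ k, 0 < ω k) {C : ℝ}
    (hC : ∀ k, ω k / ω (k + 1) ≤ C) {B : ℓ →L[ℂ] ℓ} (hB : ∀ (x : ℓ) (k : ℤ), B x k = x (k + 1))
    (hS : SalasCondition ω) (U V : Set ℓ) (hU : IsOpen U) (hUne : U.Nonempty) (hV : IsOpen V)
    (hVne : V.Nonempty) : ∃ m, (U ∩ ⇑(B ^ m) ⁻¹' V).Nonempty := by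
  obtain ⟨u, hu⟩ := hUne
  obtain ⟨v, hv⟩ := hVne
  obtain ⟨F, huF, hvF⟩ := (((hasSum_single hp hω u).eventually (hU.mem_nhds hu)).and
    ((hasSum_single hp hω v).eventually (hV.mem_nhds hv))).exists
  obtain ⟨q, hq⟩ := F.bddAbove
  obtain ⟨m, hm_add, hm_sub⟩ := hS q
  set u' := ∑ k ∈ F, single p ω k (u k)
  -- `w j = u' + Sᵐ v'` with `S` the forward shift, so that `Bᵐ (w j) = Bᵐ u' + v'`
  set w := fun j => u' + ∑ k ∈ F, single p ω (k + m j) (v k)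
  have hw : Tendsto w atTop (𝓝 u') := by
    simpa using tendsto_const_nhds.add (tendsto_finsetSum F fun k hk =>
      tendsto_single_zero hp hω (tendsto_weight_add_of_le hω hC (hq hk) hm_add) (v k))
  have hBw : Tendsto (fun j => (B ^ m j) (w j)) atTop (𝓝 (∑ k ∈ F, single p ω k (v k))) := by
    have hsmall : Tendsto (fun j => ∑ k ∈ F, single p ω (k - m j) (u k)) atTop (𝓝 0) := by
      simp_rw [sub_eq_add_neg] at hm_sub ⊢
      simpa using tendsto_finsetSum F fun k hk =>
        tendsto_single_zero hp hω (tendsto_weight_add_of_le hω hC (hq hk) hm_sub) (u k)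
    refine ((zero_add (∑ k ∈ F, single p ω k (v k))) ▸
      hsmall.add tendsto_const_nhds).congr fun j => ?_
    simp only [w, u', map_add, map_sum, pow_single hω hB, add_sub_cancel_right]
  obtain ⟨j, hwU, hBwV⟩ := ((hw.eventually (hU.mem_nhds huF)).and
    (hBw.eventually (hV.mem_nhds hvF))).exists
  exact ⟨m j, w j, hwU, hBwV⟩

section Orbit

variable {B : Lp ℂ p (wMeasure p ω) →L[ℂ] Lp ℂ p (wMeasure p ω)} {x y : Lp ℂ p (wMeasure p ω)}
  {lam : ℕ → ℂ} {n : ℕ → ℕ}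

theorem tendsto_smul_pow_apply (hp : p ≠ ∞) (hω : ∀ k, 0 < ω k)
    (hB : ∀ (x : ℓ) (k : ℤ), B x k = x (k + 1))
    (hconv : Tendsto (fun k => lam k • (B ^ n k) x) atTop (𝓝 y)) (j : ℤ) :
    Tendsto (fun k => lam k * x (j + n k)) atTop (𝓝 (y j)) := by
  simpa only [smul_apply hω, pow_apply hB] using tendsto_apply hp hω hconv j

theorem tendsto_weight_add_of_tendsto_smul_pow (hp : p ≠ ∞) (hω : ∀ k, 0 < ω k)
    (hB : ∀ (x : ℓ) (k : ℤ), B x k = x (k + 1)) {M : ℝ} (hM : ∀ k, ‖lam k‖ ≤ M)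
    (hn : StrictMono n) (hconv : Tendsto (fun k => lam k • (B ^ n k) x) atTop (𝓝 y)) {j : ℤ}
    (hj : y j ≠ 0) : Tendsto (fun k => ω (j + n k)) atTop (𝓝 0) := by
  have hcof : Tendsto (fun k => j + (n k : ℤ)) atTop cofinite := Nat.cofinite_eq_atTop ▸
    Function.Injective.tendsto_cofinite fun a b h => hn.injective (by simpa using h)
  have hlarge : ∀ᶠ k in atTop, ‖y j‖ / 2 ≤ M * ‖x (j + n k)‖ := by
    filter_upwards [(tendsto_smul_pow_apply hp hω hB hconv j).norm.eventually
      (eventually_ge_nhds (half_lt_self (norm_pos_iff.2 hj)))] with k hk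
    exact hk.trans (by rw [norm_mul]; gcongr; exact hM k)
  refine tendsto_zero_of_mul_tendsto_zero_of_ge (half_pos (norm_pos_iff.2 hj))
    (fun k => (hω _).le) hlarge ?_
  simpa [mul_left_comm] using ((tendsto_weight_mul_norm_apply hp hω x).comp hcof).const_mul M

theorem tendsto_weight_sub_of_tendsto_smul_pow (hp : p ≠ ∞) (hω : ∀ k, 0 < ω k)
    (hB : ∀ (x : ℓ) (k : ℤ), B x k = x (k + 1)) {c : ℝ} (hc : 0 < c) (hcl : ∀ k, c ≤ ‖lam k‖)
    (hn : StrictMono n) (hconv : Tendsto (fun k => lam k • (B ^ n k) x) atTop (𝓝 y)) {i : ℤ}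
    (hi : x i ≠ 0) : Tendsto (fun k => ω (i - n k)) atTop (𝓝 0) := by
  have hcof : Tendsto (fun k => i - (n k : ℤ)) atTop cofinite := Nat.cofinite_eq_atTop ▸
    Function.Injective.tendsto_cofinite fun a b h => hn.injective (by simpa using h)
  have h := tendsto_weight_mul_norm_apply_of_tendsto hp hω hconv hcof
  simp only [smul_apply hω, pow_apply hB, sub_add_cancel] at h
  refine tendsto_zero_of_mul_tendsto_zero_of_ge (mul_pos hc (norm_pos_iff.2 hi))
    (fun k => (hω _).le) (Eventually.of_forall fun k => ?_) h
  rw [norm_mul]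
  gcongr
  exact hcl k

theorem exists_ge_apply_ne_zero_of_tendsto_smul_pow (hp : p ≠ ∞) (hω : ∀ k, 0 < ω k)
    (hB : ∀ (x : ℓ) (k : ℤ), B x k = x (k + 1)) (hn : StrictMono n)
    (hconv : Tendsto (fun k => lam k • (B ^ n k) x) atTop (𝓝 y)) {j : ℤ} (hj : y j ≠ 0)
    (s : ℤ) : ∃ i, s ≤ i ∧ x i ≠ 0 := by
  by_contra! h
  have hzero : ∀ᶠ k in atTop, 0 = lam k * x (j + n k) :=
    ((tendsto_natCast_atTop_atTop.comp hn.tendsto_atTop).eventually_ge_atTop (s - j)).mono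
      fun k hk => by rw [h _ (by simp at hk; omega), mul_zero]
  exact hj (tendsto_nhds_unique (tendsto_const_nhds.congr' hzero)
    (tendsto_smul_pow_apply hp hω hB hconv j)).symm

theorem salasCondition_of_tendsto_smul_pow (hp : p ≠ ∞) (hω : ∀ k, 0 < ω k) {C : ℝ}
    (hC : ∀ k, ω k / ω (k + 1) ≤ C) (hB : ∀ (x : ℓ) (k : ℤ), B x k = x (k + 1)) {M c : ℝ}
    (hM : ∀ k, ‖lam k‖ ≤ M) (hc : 0 < c) (hcl : ∀ k, c ≤ ‖lam k‖) (hn : StrictMono n)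
    (hy : y ≠ 0) (hconv : Tendsto (fun k => lam k • (B ^ n k) x) atTop (𝓝 y)) :
    SalasCondition ω := by
  obtain ⟨j, hj⟩ := exists_apply_ne_zero hω hy
  have hfwd := tendsto_weight_add_of_tendsto_smul_pow hp hω hB hM hn hconv hj
  intro q
  obtain ⟨i, hi, hxi⟩ :=
    exists_ge_apply_ne_zero_of_tendsto_smul_pow hp hω hB hn hconv hj (2 * q - j)
  have hbwd : Tendsto (fun k => ω (2 * q - j + -(n k : ℤ))) atTop (𝓝 0) :=
    tendsto_weight_add_of_le hω hC hi (by
      simpa only [sub_eq_add_neg] using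
        tendsto_weight_sub_of_tendsto_smul_pow hp hω hB hc hcl hn hconv hxi)
  have hm : ∀ᶠ k in atTop, (((n k : ℤ) + (j - q)).toNat : ℤ) = n k + (j - q) :=
    ((tendsto_natCast_atTop_atTop.comp hn.tendsto_atTop).eventually_ge_atTop (q - j)).mono
      fun k hk => Int.toNat_of_nonneg (by simp at hk; omega)
  -- `q + mₖ = j + nₖ` and `q - mₖ = (2q - j) - nₖ`
  refine ⟨fun k => ((n k : ℤ) + (j - q)).toNat, hfwd.congr' (hm.mono fun k hk => ?_),
    hbwd.congr' (hm.mono fun k hk => ?_)⟩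
  · simp only [hk]; ring_nf
  · simp only [hk]; ring_nf

end Orbit

end WeightedLp

/-- if `Γ ⊂ ℂ` is bounded and bounded away from zero and for some `x` the
orbit `{λ • B ^ n x : λ ∈ Γ, n ∈ ℕ}` has a non-zero norm limit point, then the bilateral
backward shift `B` is hypercyclic. -/
theorem stmt14 (p : ENNReal) [Fact (1 ≤ p)] (hp : p ≠ ∞) (ω : ℤ → ℝ) (hω : ∀ k, 0 < ω k)
    (hbdd : ∃ C : ℝ, ∀ k : ℤ, ω k / ω (k + 1) ≤ C)
    (B : Lp ℂ p (wMeasure p ω) →L[ℂ] Lp ℂ p (wMeasure p ω))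
    (hB : ∀ (x : Lp ℂ p (wMeasure p ω)) (k : ℤ), B x k = x (k + 1))
    (Γ : Set ℂ) (hΓbd : ∃ M : ℝ, ∀ γ ∈ Γ, ‖γ‖ ≤ M)
    (hΓaway : ∃ c : ℝ, 0 < c ∧ ∀ γ ∈ Γ, c ≤ ‖γ‖)
    (x : Lp ℂ p (wMeasure p ω))
    (lam : ℕ → ℂ) (hlam : ∀ k, lam k ∈ Γ)
    (n : ℕ → ℕ) (hn : StrictMono n)
    (y : Lp ℂ p (wMeasure p ω)) (hy : y ≠ 0)
    (hconv : Tendsto (fun k => lam k • (B ^ n k) x) atTop (nhds y)) :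
    ∃ z : Lp ℂ p (wMeasure p ω), Dense (Set.range fun m : ℕ => (B ^ m) z) := by
  -- registers `p ≠ ∞` for the instance `Lp.SecondCountableTopology`
  have : Fact (p ≠ ∞) := ⟨hp⟩
  obtain ⟨C, hC⟩ := hbdd
  obtain ⟨M, hM⟩ := hΓbd
  obtain ⟨c, hc, hcΓ⟩ := hΓaway
  have hS : SalasCondition ω := WeightedLp.salasCondition_of_tendsto_smul_pow hp hω hC hB
    (fun k => hM _ (hlam k)) hc (fun k => hcΓ _ (hlam k)) hn hy hconv
  exact exists_dense_range_of_transitive (fun m => (B ^ m).continuous)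
    (WeightedLp.exists_inter_preimage_pow_nonempty hp hω hC hB hS)
end
end
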